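/- arXiv:1209.5514 — 3 statements merged into one kernel-verified Lean document; each statement's English description precedes it below -/
import Mathlib

section
/- Every connected cubic graph that is not isomorphic to the complete graph K4 and not isomorphic to the complete bipartite graph K_{3,3} contains at least one cracker whose size is at most the girth of the graph. -/
/-!
Let `S` be the vertex set of a shortest cycle, of length `g`. Every vertex of `S` has two
neighbours on the cycle, hence at most one edge leaving `S`, so at most `g` edges leave `S`.
If moreover no outside vertex has two neighbours in `S`, the leaving edges form a matching whose
deletion disconnects the graph, and a minimal disconnecting subset of it is a cracker of size
at most `g`. For `g ≥ 5` this is automatic: a common outside neighbour would close a cycle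
shorter than `g`. Otherwise we absorb such an outside vertex into `S`; every vertex of `S` still
has at most one outside neighbour and `|S| + #(leaving edges)` does not increase. Either a
matching cut appears, or `S` swallows the whole graph, which forces `|V| ≤ 2g - 2`: for `g = 3`
this is `K₄`, for `g = 4` (no triangles) it is `K₃,₃`.
-/

open SimpleGraph

/-- A graph is cubic if every vertex has exactly three neighbours. -/
def IsCubic {V : Type*} (G : SimpleGraph V) : Prop :=
  ∀ v : V, (G.neighborSet v).ncard = 3

/-- A cracker of `G`: a nonempty set of edges of `G`, no two of which share a
vertex, whose deletion disconnects `G`, while no proper subset disconnects `G`. -/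
def IsCracker {V : Type*} (G : SimpleGraph V) (C : Set (Sym2 V)) : Prop :=
  C.Nonempty ∧ C ⊆ G.edgeSet ∧
    C.Pairwise (fun e f => ∀ v : V, ¬(v ∈ e ∧ v ∈ f)) ∧
    ¬(G.deleteEdges C).Connected ∧
    ∀ C' : Set (Sym2 V), C' ⊂ C → (G.deleteEdges C').Connected

/-- A `k`-cracker is a cracker consisting of `k` edges. -/
def IsKCracker {V : Type*} (G : SimpleGraph V) (C : Set (Sym2 V)) (k : ℕ) : Prop :=
  IsCracker G C ∧ C.ncard = k

open Finset

theorem IsCubic.card_neighborFinset {V : Type*} [Fintype V] {G : SimpleGraph V}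
    [DecidableRel G.Adj] (hcub : IsCubic G) (v : V) : #(G.neighborFinset v) = 3 := by
  rw [neighborFinset_def, ← Set.ncard_eq_toFinset_card', hcub v]

namespace SimpleGraph

variable {V : Type*} {G : SimpleGraph V}

theorem exists_isCracker_subset (hG : G.Connected) {D : Set (Sym2 V)} (hD : D.Finite)
    (hDG : D ⊆ G.edgeSet) (hD_pair : D.Pairwise fun e f => ∀ v : V, ¬(v ∈ e ∧ v ∈ f))
    (hD_dis : ¬(G.deleteEdges D).Connected) : ∃ C ⊆ D, IsCracker G C := by
  obtain ⟨C, -, ⟨hCD, hC_dis⟩, hC_min⟩ :=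
    (hD.finite_subsets.inter_of_left {C | ¬(G.deleteEdges C).Connected}).exists_le_minimal
      (a := D) ⟨Set.Subset.rfl, hD_dis⟩
  refine ⟨C, hCD, Set.nonempty_iff_ne_empty.2 ?_, hCD.trans hDG, hD_pair.mono hCD, hC_dis,
    fun C' hC' => ?_⟩
  · rintro rfl
    exact hC_dis (by rwa [deleteEdges_empty])
  · by_contra h
    exact hC'.not_subset (hC_min ⟨hC'.subset.trans hCD, h⟩ hC'.subset)

section Cut

variable [Fintype V] [DecidableEq V] [DecidableRel G.Adj]

def edgeBoundary (G : SimpleGraph V) [DecidableRel G.Adj] (S : Finset V) : Finset (Sym2 V) :=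
  S.biUnion fun x => (G.neighborFinset x \ S).image fun y => s(x, y)

def cutSize (G : SimpleGraph V) [DecidableRel G.Adj] (S : Finset V) : ℕ :=
  ∑ x ∈ S, #(G.neighborFinset x \ S)

def IsThin (G : SimpleGraph V) [DecidableRel G.Adj] (S : Finset V) : Prop :=
  ∀ x ∈ S, #(G.neighborFinset x \ S) ≤ 1

variable {S : Finset V}

theorem mem_edgeBoundary {e : Sym2 V} :
    e ∈ G.edgeBoundary S ↔ ∃ x ∈ S, ∃ y, G.Adj x y ∧ y ∉ S ∧ s(x, y) = e := by
  simp [edgeBoundary, and_assoc]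

theorem coe_edgeBoundary_subset_edgeSet : ↑(G.edgeBoundary S) ⊆ G.edgeSet := by
  intro e he
  obtain ⟨x, -, y, hxy, -, rfl⟩ := mem_edgeBoundary.1 he
  exact hxy

theorem card_edgeBoundary_le_cutSize : #(G.edgeBoundary S) ≤ G.cutSize S :=
  card_biUnion_le.trans <| sum_le_sum fun _ _ => card_image_le

theorem not_connected_deleteEdges_edgeBoundary {s t : V} (hs : s ∈ S) (ht : t ∉ S) :
    ¬(G.deleteEdges (G.edgeBoundary S)).Connected := by
  intro h
  obtain ⟨p⟩ := h.preconnected s t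
  obtain ⟨d, -, hd₁, hd₂⟩ := p.exists_boundary_dart S hs ht
  have hd := d.adj
  rw [deleteEdges_adj] at hd
  exact hd.2 (mem_edgeBoundary.2 ⟨_, hd₁, _, hd.1, hd₂, rfl⟩)

theorem IsThin.pairwise_edgeBoundary (hS : G.IsThin S) (hSc : G.IsThin Sᶜ) :
    (G.edgeBoundary S : Set (Sym2 V)).Pairwise fun e f => ∀ v : V, ¬(v ∈ e ∧ v ∈ f) := by
  rintro e he f hf hef v ⟨hve, hvf⟩
  obtain ⟨x, hx, y, hxy, hy, rfl⟩ := mem_edgeBoundary.1 he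
  obtain ⟨x', hx', y', hxy', hy', rfl⟩ := mem_edgeBoundary.1 hf
  rcases Sym2.mem_iff.1 hve with rfl | rfl <;> rcases Sym2.mem_iff.1 hvf with rfl | rfl
  · refine hef ?_
    rw [card_le_one.1 (hS v hx) y (by simp [hxy, hy]) y' (by simp [hxy', hy'])]
  · exact hy' hx
  · exact hy hx'
  · refine hef ?_
    rw [card_le_one.1 (hSc v (by simpa using hy)) x (by simp [hxy.symm, hx])
      x' (by simp [hxy'.symm, hx'])]

theorem exists_isCracker_of_isThin (hG : G.Connected) (hS : S.Nonempty) (hSc : Sᶜ.Nonempty)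
    (hS_thin : G.IsThin S) (hSc_thin : G.IsThin Sᶜ) :
    ∃ C, IsCracker G C ∧ C.ncard ≤ G.cutSize S := by
  obtain ⟨s, hs⟩ := hS
  obtain ⟨t, ht⟩ := hSc
  obtain ⟨C, hC, hC_cr⟩ := exists_isCracker_subset hG (G.edgeBoundary S).finite_toSet
    coe_edgeBoundary_subset_edgeSet (hS_thin.pairwise_edgeBoundary hSc_thin)
    (not_connected_deleteEdges_edgeBoundary hs (mem_compl.1 ht))
  refine ⟨C, hC_cr, ?_⟩
  calc C.ncard ≤ (G.edgeBoundary S : Set (Sym2 V)).ncard := Set.ncard_le_ncard hC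
    _ = #(G.edgeBoundary S) := Set.ncard_coe_finset _
    _ ≤ G.cutSize S := card_edgeBoundary_le_cutSize

theorem card_neighborFinset_sdiff_insert_add {x y : V} (hy : y ∉ S) :
    #(G.neighborFinset x \ insert y S) + (if G.Adj y x then 1 else 0) =
      #(G.neighborFinset x \ S) := by
  rw [sdiff_insert]
  split_ifs with hyx
  · exact card_erase_add_one (by simp [hyx.symm, hy])
  · rw [erase_eq_of_notMem fun h => hyx ((G.mem_neighborFinset _ _).1 (mem_sdiff.1 h).1).symm,
      add_zero]

theorem cutSize_insert {y : V} (hy : y ∉ S) :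
    G.cutSize (insert y S) + #(G.neighborFinset y ∩ S) =
      G.cutSize S + #(G.neighborFinset y \ S) := by
  have hN : G.neighborFinset y \ insert y S = G.neighborFinset y \ S := by
    rw [sdiff_insert, erase_eq_of_notMem (by simp)]
  have hk : #(G.neighborFinset y ∩ S) = ∑ x ∈ S, if G.Adj y x then 1 else 0 := by
    rw [← card_filter, inter_comm, ← filter_mem_eq_inter]
    simp
  rw [cutSize, cutSize, sum_insert hy, hN, hk, add_assoc, ← sum_add_distrib, add_comm]
  exact congrArg (· + _) (sum_congr rfl fun x _ => card_neighborFinset_sdiff_insert_add hy)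

theorem IsThin.insert {y : V} (hS : G.IsThin S) (hy : #(G.neighborFinset y \ S) ≤ 1) :
    G.IsThin (insert y S) := by
  intro x hx
  refine (card_le_card (sdiff_subset_sdiff subset_rfl (subset_insert y S))).trans ?_
  rcases mem_insert.1 hx with rfl | hx
  exacts [hy, hS x hx]

theorem IsThin.cutSize_le_card (hS : G.IsThin S) : G.cutSize S ≤ #S := by
  simpa [cutSize] using sum_le_card_nsmul S (fun x => #(G.neighborFinset x \ S)) 1 hS

/- Absorbing an outside vertex with `k ≥ 2` neighbours in `S` lowers `cutSize` by `2k - 3`,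
so `#S + cutSize S` never grows; the absorption that exhausts `V` has `k = 3` and lowers it
by two. -/
theorem exists_isCracker_or_card_le (hG : G.Connected) (hcub : IsCubic G) {S : Finset V}
    (hS : S.Nonempty) (hSc : Sᶜ.Nonempty) (hS_thin : G.IsThin S) :
    (∃ C, IsCracker G C ∧ C.ncard ≤ G.cutSize S) ∨
      Fintype.card V + 2 ≤ #S + G.cutSize S := by
  by_cases hSc_thin : G.IsThin Sᶜ
  · exact Or.inl (exists_isCracker_of_isThin hG hS hSc hS_thin hSc_thin)
  obtain ⟨y, hyS, hy⟩ : ∃ y ∉ S, 1 < #(G.neighborFinset y ∩ S) := by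
    simpa [IsThin, sdiff_compl] using hSc_thin
  have hcut := cutSize_insert (G := G) hyS
  have hdeg := card_inter_add_card_sdiff (G.neighborFinset y) S
  rw [hcub.card_neighborFinset] at hdeg
  by_cases hSc' : (insert y S)ᶜ.Nonempty
  · rcases exists_isCracker_or_card_le hG hcub (insert_nonempty y S) hSc'
      (hS_thin.insert (by omega)) with ⟨C, hC, hC_card⟩ | hV
    · exact Or.inl ⟨C, hC, by omega⟩
    · rw [card_insert_of_notMem hyS] at hV
      omega
  · rw [not_nonempty_iff_eq_empty, compl_eq_empty_iff] at hSc'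
    have hV : Fintype.card V = #S + 1 := by
      rw [← card_univ, ← hSc', card_insert_of_notMem hyS]
    have hcut_univ : G.cutSize (insert y S) = 0 := by simp [hSc', cutSize]
    have hN : G.neighborFinset y \ S = ∅ := by
      refine sdiff_eq_empty_iff_subset.2 fun z hz => ?_
      have hzy : z ≠ y := ((G.mem_neighborFinset y z).1 hz).ne'
      have hz : z ∈ insert y S := hSc' ▸ mem_univ z
      simpa [hzy] using hz
    rw [hN, card_empty] at hcut hdeg
    right
    omega
termination_by #Sᶜ
decreasing_by rw [compl_insert]; exact card_erase_lt_of_mem (mem_compl.2 hyS)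

end Cut

namespace Walk

theorem isCycle_cons_cons {x y v : V} {p : G.Walk y x} (hp : p.IsPath) (hv : v ∉ p.support)
    (hxy : x ≠ y) (hxv : G.Adj x v) (hvy : G.Adj v y) : (cons hxv (cons hvy p)).IsCycle := by
  refine (cons_isCycle_iff _ _).2 ⟨(cons_isPath_iff _ _).2 ⟨hp, hv⟩, ?_⟩
  rw [edges_cons, List.mem_cons, not_or]
  refine ⟨fun h => ?_, fun h => hv (p.snd_mem_support_of_mem_edges h)⟩
  rcases Sym2.eq_iff.1 h with ⟨rfl, -⟩ | ⟨h, -⟩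
  exacts [hxv.ne rfl, hxy h]

theorem length_le_of_egirth_eq {x b : V} {c : G.Walk x x} (hc : G.egirth = c.length)
    {d : G.Walk b b} (hd : d.IsCycle) : c.length ≤ d.length := by
  exact_mod_cast hc ▸ egirth_le_length hd

variable [DecidableEq V]

theorem card_support_toFinset_le_length {x : V} {c : G.Walk x x} (hc : ¬c.Nil) :
    #c.support.toFinset ≤ c.length := by
  rw [← cons_tail_support, List.toFinset_cons,
    insert_eq_of_mem (List.mem_toFinset.2 (end_mem_tail_support hc))]
  refine (List.toFinset_card_le _).trans ?_
  simp [length_support]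

theorem IsCycle.exists_isPath_isPath {x y : V} {c : G.Walk x x} (hc : c.IsCycle)
    (hy : y ∈ c.support) (hxy : x ≠ y) :
    ∃ p q : G.Walk y x, p.IsPath ∧ q.IsPath ∧ p.length + q.length = c.length ∧
      p.support ⊆ c.support ∧ q.support ⊆ c.support ∧
      p.edges ⊆ c.edges ∧ q.edges ⊆ c.edges := by
  have hspec := c.take_spec hy
  have hc' := hc
  rw [← hspec] at hc'
  refine ⟨(c.takeUntil y hy).reverse, c.dropUntil y hy,
    (hc.isPath_takeUntil hy).reverse, hc'.isPath_of_append_right (not_nil_of_ne hxy), ?_, ?_,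
    c.support_dropUntil_subset_support hy, ?_, c.edges_dropUntil_subset_edges hy⟩
  · rw [length_reverse, ← length_append, hspec]
  · rw [support_reverse]
    exact fun z hz => c.support_takeUntil_subset_support hy (List.mem_reverse.1 hz)
  · rw [edges_reverse]
    exact fun e he => c.edges_takeUntil_subset_edges hy (List.mem_reverse.1 he)

variable {x : V} {c : G.Walk x x}

/- A chord `xy` splits the cycle into two shorter cycles whose lengths add up to
`c.length + 2`. -/
theorem IsCycle.mem_edges_of_adj (hc : c.IsCycle) (hgirth : G.egirth = c.length) {y : V}
    (hy : y ∈ c.support) (hxy : G.Adj x y) : s(x, y) ∈ c.edges := by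
  by_contra h
  obtain ⟨p, q, hp, hq, hlen, -, -, hpc, hqc⟩ := hc.exists_isPath_isPath hy hxy.ne
  have hp' := length_le_of_egirth_eq hgirth
    ((cons_isCycle_iff _ hxy).2 ⟨hp, fun he => h (hpc he)⟩)
  have hq' := length_le_of_egirth_eq hgirth
    ((cons_isCycle_iff _ hxy).2 ⟨hq, fun he => h (hqc he)⟩)
  have := hc.three_le_length
  simp only [length_cons] at hp' hq'
  omega

/- A common neighbour `v` off the cycle closes two cycles through `v` whose lengths add up to
`c.length + 4`. -/
theorem IsCycle.not_adj_of_notMem_support (hc : c.IsCycle) (hgirth : G.egirth = c.length)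
    (h5 : 5 ≤ c.length) {y v : V} (hy : y ∈ c.support) (hxy : x ≠ y) (hv : v ∉ c.support)
    (hxv : G.Adj x v) : ¬G.Adj v y := by
  intro hvy
  obtain ⟨p, q, hp, hq, hlen, hps, hqs, -, -⟩ := hc.exists_isPath_isPath hy hxy
  have hp' := length_le_of_egirth_eq hgirth
    (isCycle_cons_cons hp (fun h => hv (hps h)) hxy hxv hvy)
  have hq' := length_le_of_egirth_eq hgirth
    (isCycle_cons_cons hq (fun h => hv (hqs h)) hxy hxv hvy)
  simp only [length_cons] at hp' hq'
  omega

variable [Fintype V] [DecidableRel G.Adj]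

theorem IsCycle.two_le_card_neighborFinset_inter (hc : c.IsCycle) {y : V}
    (hy : y ∈ c.support) : 2 ≤ #(G.neighborFinset y ∩ c.support.toFinset) := by
  rw [← hc.ncard_neighborSet_toSubgraph_eq_two hy, ← Set.ncard_coe_finset]
  refine Set.ncard_le_ncard (fun z hz => ?_) (Set.toFinite _)
  simp only [coe_inter, Set.mem_inter_iff, mem_coe, mem_neighborFinset, List.mem_toFinset]
  exact ⟨hz.adj_sub, c.mem_verts_toSubgraph.1 (c.toSubgraph.edge_vert hz.symm)⟩

theorem IsCycle.isThin_compl_support_toFinset (hc : c.IsCycle) (hgirth : G.egirth = c.length)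
    (h5 : 5 ≤ c.length) : G.IsThin (c.support.toFinset)ᶜ := by
  intro v hv
  rw [sdiff_compl]
  refine card_le_one.2 fun y hy z hz => ?_
  by_contra hyz
  simp only [inf_eq_inter, mem_inter, mem_neighborFinset, List.mem_toFinset] at hy hz
  exact (hc.rotate hy.2).not_adj_of_notMem_support (by simpa using hgirth) (by simpa using h5)
    (by simpa using hz.2) hyz (by simpa using hv) hy.1.symm hz.1

end Walk

end SimpleGraph

namespace IsCubic

variable {V : Type*} {G : SimpleGraph V} [Fintype V]

theorem isThin_support_toFinset [DecidableEq V] [DecidableRel G.Adj] (hcub : IsCubic G)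
    {a : V} {w : G.Walk a a} (hw : w.IsCycle) : G.IsThin w.support.toFinset := by
  intro x hx
  have := card_inter_add_card_sdiff (G.neighborFinset x) w.support.toFinset
  have := hw.two_le_card_neighborFinset_inter (List.mem_toFinset.1 hx)
  rw [hcub.card_neighborFinset] at *
  omega

theorem compl_support_toFinset_nonempty [DecidableEq V] (hcub : IsCubic G) {a : V}
    {w : G.Walk a a} (hw : w.IsCycle) (hgirth : G.egirth = w.length) :
    (w.support.toFinset)ᶜ.Nonempty := by
  by_contra! h
  have hsub : G.neighborSet a ⊆ w.toSubgraph.neighborSet a := fun y hy => by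
    have hy' : y ∈ w.support := List.mem_toFinset.1 ((compl_eq_empty_iff _).1 h ▸ mem_univ y)
    have := hw.mem_edges_of_adj hgirth hy' hy
    rwa [← Walk.mem_edges_toSubgraph, Subgraph.mem_edgeSet] at this
  have := Set.ncard_le_ncard hsub (Set.toFinite _)
  rw [hcub a, hw.ncard_neighborSet_toSubgraph_eq_two w.start_mem_support] at this
  omega

theorem not_isAcyclic [DecidableRel G.Adj] (hcub : IsCubic G) (hG : G.Connected) :
    ¬G.IsAcyclic := by
  intro hacyc
  obtain ⟨v⟩ := hG.nonempty
  obtain ⟨u, hu⟩ :=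
    card_pos.1 (hcub.card_neighborFinset v ▸ three_pos : 0 < #(G.neighborFinset v))
  have : Nontrivial V := ⟨⟨u, v, ((G.mem_neighborFinset v u).1 hu).ne'⟩⟩
  obtain ⟨x, -, -, hx, -⟩ := IsTree.exists_ne_and_degree_eq_one ⟨hG, hacyc⟩
  rw [← card_neighborFinset_eq_degree, hcub.card_neighborFinset] at hx
  omega

theorem nonempty_iso_completeGraph [DecidableEq V] [DecidableRel G.Adj] (hcub : IsCubic G)
    [Nonempty V] (hV : Fintype.card V ≤ 4) : Nonempty (G ≃g completeGraph (Fin 4)) := by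
  have hN (v : V) : G.neighborFinset v = univ.erase v := by
    refine eq_of_subset_of_card_le (fun u hu => mem_erase.2
      ⟨((G.mem_neighborFinset v u).1 hu).ne', mem_univ u⟩) ?_
    rw [hcub.card_neighborFinset, card_erase_of_mem (mem_univ v), card_univ]
    omega
  have hV4 : Fintype.card V = 4 := by
    have := card_erase_of_mem (mem_univ (Classical.arbitrary V))
    rw [← hN, hcub.card_neighborFinset, card_univ] at this
    omega
  obtain rfl : G = ⊤ := by
    ext u v
    rw [top_adj, ← mem_neighborFinset, hN u]
    simp [eq_comm]
  exact ⟨Iso.completeGraph (Fintype.equivFinOfCardEq hV4)⟩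

theorem nonempty_iso_completeBipartiteGraph [DecidableEq V] [DecidableRel G.Adj]
    (hcub : IsCubic G) (htri : G.CliqueFree 3) [Nonempty V] (hV : Fintype.card V ≤ 6) :
    Nonempty (G ≃g completeBipartiteGraph (Fin 3) (Fin 3)) := by
  obtain a : V := Classical.arbitrary V
  set X := G.neighborFinset a
  have hX : #X = 3 := hcub.card_neighborFinset a
  have hX_indep : ∀ x ∈ X, ∀ y ∈ X, ¬G.Adj x y := fun x hx y hy hxy =>
    htri {a, x, y} (is3Clique_triple_iff.2 ⟨(G.mem_neighborFinset a x).1 hx,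
      (G.mem_neighborFinset a y).1 hy, hxy⟩)
  have hNX : ∀ x ∈ X, G.neighborFinset x = Xᶜ := fun x hx =>
    eq_of_subset_of_card_le (fun y hy => mem_compl.2 fun hyX => hX_indep x hx y hyX
      ((G.mem_neighborFinset x y).1 hy))
      (by rw [card_compl, hX, hcub.card_neighborFinset x]; omega)
  have hNY : ∀ y ∉ X, G.neighborFinset y = X := fun y hy =>
    (eq_of_subset_of_card_le (fun x hx => (G.mem_neighborFinset y x).2
      ((G.mem_neighborFinset x y).1 (hNX x hx ▸ mem_compl.2 hy)).symm)
      (by rw [hX, hcub.card_neighborFinset y])).symm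
  have hadj : ∀ u v, G.Adj u v ↔ (u ∈ X ↔ v ∉ X) := by
    intro u v
    by_cases hu : u ∈ X
    · simpa [hu] using (Finset.ext_iff.1 (hNX u hu) v)
    · simpa [hu] using (Finset.ext_iff.1 (hNY u hu) v)
  have hXc : #Xᶜ = 3 := by
    obtain ⟨x, hx⟩ := card_pos.1 (hX ▸ three_pos : 0 < #X)
    rw [← hNX x hx, hcub.card_neighborFinset x]
  let eX : {v // v ∈ X} ≃ Fin 3 := Fintype.equivFinOfCardEq (by simpa using hX)
  let eY : {v // v ∉ X} ≃ Fin 3 := Fintype.equivFinOfCardEq (by simpa [card_compl] using hXc)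
  let φ : G ≃g completeBipartiteGraph {v // v ∈ X} {v // v ∉ X} :=
    ⟨(Equiv.sumCompl (· ∈ X)).symm, fun {u v} => by
      by_cases hu : u ∈ X <;> by_cases hv : v ∈ X <;> simp [hu, hv, hadj]⟩
  exact ⟨φ.trans (completeBipartiteGraphCongr eX eY)⟩

end IsCubic

/-- every connected cubic graph other than K4 and K_{3,3} contains a
cracker of size at most the girth. -/
theorem cracker_le_girth {V : Type*} [Fintype V] (G : SimpleGraph V)
    (hG : G.Connected) (hcub : IsCubic G)
    (hK4 : ¬ Nonempty (G ≃g completeGraph (Fin 4)))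
    (hK33 : ¬ Nonempty (G ≃g completeBipartiteGraph (Fin 3) (Fin 3))) :
    ∃ C : Set (Sym2 V), IsCracker G C ∧ (C.ncard : ℕ∞) ≤ G.egirth := by
  classical
  obtain ⟨a, w, hw, hgirth⟩ := exists_egirth_eq_length.2 (hcub.not_isAcyclic hG)
  set S := w.support.toFinset
  have hS : S.Nonempty := ⟨a, List.mem_toFinset.2 w.start_mem_support⟩
  have hSc := hcub.compl_support_toFinset_nonempty hw hgirth
  have hS_thin := hcub.isThin_support_toFinset hw
  have hS_card : #S ≤ w.length := Walk.card_support_toFinset_le_length hw.not_nil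
  have hcut : G.cutSize S ≤ w.length := hS_thin.cutSize_le_card.trans hS_card
  suffices ∃ C, IsCracker G C ∧ C.ncard ≤ G.cutSize S by
    obtain ⟨C, hC, hC_card⟩ := this
    exact ⟨C, hC, hgirth ▸ by exact_mod_cast hC_card.trans hcut⟩
  by_cases h5 : 5 ≤ w.length
  · exact exists_isCracker_of_isThin hG hS hSc hS_thin
      (hw.isThin_compl_support_toFinset hgirth h5)
  refine (exists_isCracker_or_card_le hG hcub hS hSc hS_thin).resolve_right fun hV => ?_
  have : Nonempty V := ⟨a⟩
  have := hw.three_le_length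
  by_cases h3 : w.length = 3
  · exact hK4 (hcub.nonempty_iso_completeGraph (by omega))
  · refine hK33 (hcub.nonempty_iso_completeBipartiteGraph (fun s hs => ?_) (by omega))
    obtain ⟨b, c, hc, hc3⟩ := is3Clique_iff_exists_cycle_length_three.1 ⟨s, hs⟩
    have := Walk.length_le_of_egirth_eq hgirth hc
    omega
end

section
/- Let Γ1 = (V1, E1) and Γ2 = (V2, E2) be vertex-disjoint connected cubic graphs, let v1 ∈ V1 have neighbours a, b, c and suppose none of the three edges incident to v1 is a bridge of Γ1; let v2 ∈ V2 have neighbours d, e, f and suppose none of the three edges incident to v2 is a bridge of Γ2. Let ΓD be the graph with vertex set (V1 \ {v1}) ∪ (V2 \ {v2}) and edge set (E1 \ {(v1,a),(v1,b),(v1,c)}) ∪ (E2 \ {(v2,d),(v2,e),(v2,f)}) ∪ {(a,d), (b,e), (c,f)}. Then ΓD is a connected cubic graph and {(a,d), (b,e), (c,f)} is a 3-cracker of ΓD. -/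
open SimpleGraph

/-- The type 3 breeding operation: delete vertex v₁ of Γ₁ (with neighbours a, b, c) and
vertex v₂ of Γ₂ (with neighbours d, e, f), and add the edges (a,d), (b,e), (c,f). -/
def breed3 {V₁ V₂ : Type*} (G₁ : SimpleGraph V₁) (G₂ : SimpleGraph V₂)
    (v₁ : V₁) (v₂ : V₂) (a b c : V₁) (d e f : V₂) :
    SimpleGraph ({x : V₁ // x ≠ v₁} ⊕ {y : V₂ // y ≠ v₂}) :=
  SimpleGraph.fromRel (fun p q =>
    (∃ x y : {x : V₁ // x ≠ v₁}, p = Sum.inl x ∧ q = Sum.inl y ∧ G₁.Adj x.1 y.1) ∨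
    (∃ x y : {y : V₂ // y ≠ v₂}, p = Sum.inr x ∧ q = Sum.inr y ∧ G₂.Adj x.1 y.1) ∨
    (∃ (x : {x : V₁ // x ≠ v₁}) (y : {y : V₂ // y ≠ v₂}), p = Sum.inl x ∧ q = Sum.inr y ∧
      ((x.1 = a ∧ y.1 = d) ∨ (x.1 = b ∧ y.1 = e) ∨ (x.1 = c ∧ y.1 = f))))

/-!
Deleting `v₁` keeps `Γ₁` connected: following a path to `v₁` up to its first visit joins every
vertex of `Γ₁ - v₁` to a neighbour of `v₁` inside `Γ₁ - v₁`, and since `v₁a` is not a bridge, a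
path from `a` to `v₁` avoiding that edge joins `a` to another neighbour of `v₁`; with only three
neighbours, they all lie in one component. So `ΓD` is the disjoint union of the connected graphs
`Γ₁ - v₁` and `Γ₂ - v₂` together with three crossing edges: deleting all of them disconnects it,
while any single one reconnects the two sides. Degrees are preserved since each of `a, b, c`
(and `d, e, f`) trades its edge to the deleted vertex for exactly one crossing edge.
-/

namespace SimpleGraph

variable {V : Type*} {G H : SimpleGraph V} {v a b c z : V}

lemma neighborSet_eq_of_ncard_eq_three (h : (G.neighborSet v).ncard = 3)
    (ha : G.Adj v a) (hb : G.Adj v b) (hc : G.Adj v c)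
    (hab : a ≠ b) (hac : a ≠ c) (hbc : b ≠ c) : G.neighborSet v = {a, b, c} := by
  have hsub : ({a, b, c} : Set V) ⊆ G.neighborSet v := by
    rintro x (rfl | rfl | rfl) <;> assumption
  have hcard : ({a, b, c} : Set V).ncard = 3 :=
    Set.ncard_eq_three.mpr ⟨a, b, c, hab, hac, hbc, rfl⟩
  exact (Set.eq_of_subset_of_ncard_le hsub (by rw [h, hcard])
    (Set.finite_of_ncard_ne_zero (by rw [h]; decide))).symm

lemma Iso.ncard_neighborSet {W : Type*} {G' : SimpleGraph W} (φ : G ≃g G') (v : V) :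
    (G'.neighborSet (φ v)).ncard = (G.neighborSet v).ncard := by
  rw [← φ.image_neighborSet, Set.ncard_image_of_injective _ φ.injective]

lemma Walk.exists_adj_reachable_induce_ne (hH : H ≤ G) {x : V} (w : H.Walk x v) (hx : x ≠ v) :
    ∃ z, ∃ hz : z ≠ v, H.Adj z v ∧ (G.induce {x | x ≠ v}).Reachable ⟨x, hx⟩ ⟨z, hz⟩ := by
  suffices ∀ {x u} (w : H.Walk x u) (hx : x ≠ v), u = v →
      ∃ z, ∃ hz : z ≠ v, H.Adj z v ∧ (G.induce {x | x ≠ v}).Reachable ⟨x, hx⟩ ⟨z, hz⟩ from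
    this w hx rfl
  intro x u w
  induction w with
  | nil => exact fun hx hu => absurd hu hx
  | @cons x y _ hxy w ih =>
    intro hx hu
    by_cases hy : y = v
    · subst hy
      exact ⟨x, hx, hxy, .rfl⟩
    · obtain ⟨z, hz, hzv, hyz⟩ := ih hy hu
      have hxy' : (G.induce {x | x ≠ v}).Adj ⟨x, hx⟩ ⟨y, hy⟩ := hH hxy
      exact ⟨z, hz, hzv, hxy'.reachable.trans hyz⟩

lemma Connected.exists_adj_reachable_induce_ne (hG : G.Connected) {x : V} (hx : x ≠ v) :
    ∃ z, ∃ hz : z ≠ v, G.Adj v z ∧ (G.induce {x | x ≠ v}).Reachable ⟨x, hx⟩ ⟨z, hz⟩ := by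
  obtain ⟨w⟩ := hG.preconnected x v
  obtain ⟨z, hz, hzv, hr⟩ := w.exists_adj_reachable_induce_ne le_rfl hx
  exact ⟨z, hz, hzv.symm, hr⟩

lemma exists_adj_reachable_induce_ne_of_not_isBridge (hvz : G.Adj v z)
    (hnb : ¬G.IsBridge s(v, z)) :
    ∃ z', ∃ hz' : z' ≠ v, G.Adj v z' ∧ z' ≠ z ∧
      (G.induce {x | x ≠ v}).Reachable ⟨z, hvz.ne'⟩ ⟨z', hz'⟩ := by
  rw [isBridge_iff, not_not] at hnb
  obtain ⟨w⟩ := hnb.symm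
  obtain ⟨z', hz', hz'v, hr⟩ := w.exists_adj_reachable_induce_ne (G.deleteEdges_le _) hvz.ne'
  rw [deleteEdges_adj, Set.mem_singleton_iff] at hz'v
  refine ⟨z', hz', hz'v.1.symm, ?_, hr⟩
  rintro rfl
  exact hz'v.2 Sym2.eq_swap

lemma Connected.induce_ne_of_neighborSet_eq (hG : G.Connected) (hN : G.neighborSet v = {a, b, c})
    (ha : ¬G.IsBridge s(v, a)) (hb : ¬G.IsBridge s(v, b)) (hc : ¬G.IsBridge s(v, c)) :
    (G.induce {x | x ≠ v}).Connected := by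
  have hadj : ∀ z, G.Adj v z ↔ z = a ∨ z = b ∨ z = c := fun z => by
    rw [← mem_neighborSet, hN]; rfl
  have hva : G.Adj v a := (hadj a).2 (.inl rfl)
  have hvb : G.Adj v b := (hadj b).2 (.inr (.inl rfl))
  have hvc : G.Adj v c := (hadj c).2 (.inr (.inr rfl))
  let K (z : V) (hz : z ≠ v) := (G.induce {x | x ≠ v}).connectedComponentMk ⟨z, hz⟩
  have other : ∀ z (hvz : G.Adj v z), ¬G.IsBridge s(v, z) →
      ∃ z', ∃ hz' : z' ≠ v, z' ≠ z ∧ (z' = a ∨ z' = b ∨ z' = c) ∧ K z hvz.ne' = K z' hz' := by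
    intro z hvz hnb
    obtain ⟨z', hz', hvz', hne, hr⟩ := exists_adj_reachable_induce_ne_of_not_isBridge hvz hnb
    exact ⟨z', hz', hne, (hadj z').1 hvz', ConnectedComponent.sound hr⟩
  have hKa : K a hva.ne' = K b hvb.ne' ∧ K a hva.ne' = K c hvc.ne' := by
    obtain ⟨a', _, ha'a, ha', hka⟩ := other a hva ha
    obtain ⟨b', _, hb'b, hb', hkb⟩ := other b hvb hb
    obtain ⟨c', _, hc'c, hc', hkc⟩ := other c hvc hc
    rcases ha' with h | h | h <;> subst a' <;> rcases hb' with h | h | h <;> subst b' <;>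
      rcases hc' with h | h | h <;> subst c' <;> grind
  rw [connected_iff_exists_forall_reachable]
  refine ⟨⟨a, hva.ne'⟩, fun ⟨x, hx⟩ => ?_⟩
  obtain ⟨z, hz, hvz, hr⟩ := hG.exists_adj_reachable_induce_ne hx
  rw [← ConnectedComponent.eq] at hr ⊢
  rcases (hadj z).1 hvz with h | h | h <;> subst z
  · exact hr.symm
  · exact hKa.1.trans hr.symm
  · exact hKa.2.trans hr.symm

end SimpleGraph

lemma IsCracker.connected {V : Type*} {G : SimpleGraph V} {C : Set (Sym2 V)}
    (h : IsCracker G C) : G.Connected := by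
  simpa using h.2.2.2.2 ∅ (Set.empty_ssubset.mpr h.1)

section CrossingEdges

variable {α β : Type*} {H₁ : SimpleGraph α} {H₂ : SimpleGraph β} {C C' : Set (Sym2 (α ⊕ β))}

lemma sym2_notMem_of_sum_adj (hC : ∀ e ∈ C, ∃ x y, e = s(Sum.inl x, Sum.inr y))
    {p q : α ⊕ β} (h : (H₁ ⊕g H₂).Adj p q) : s(p, q) ∉ C := by
  intro hpq
  obtain ⟨x, y, hxy⟩ := hC _ hpq
  rcases p with p | p <;> rcases q with q | q <;> simp_all

lemma deleteEdges_sum_sup_fromEdgeSet (hC : ∀ e ∈ C, ∃ x y, e = s(Sum.inl x, Sum.inr y)) :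
    ((H₁ ⊕g H₂) ⊔ fromEdgeSet C).deleteEdges C = H₁ ⊕g H₂ := by
  ext p q
  simp only [deleteEdges_adj, sup_adj, fromEdgeSet_adj]
  exact ⟨fun ⟨h, hC'⟩ => h.resolve_right fun h' => hC' h'.1,
    fun h => ⟨.inl h, sym2_notMem_of_sum_adj hC h⟩⟩

lemma connected_deleteEdges_sum_sup_fromEdgeSet (h₁ : H₁.Connected) (h₂ : H₂.Connected)
    (hC : ∀ e ∈ C, ∃ x y, e = s(Sum.inl x, Sum.inr y)) (hC' : C' ⊂ C) :
    (((H₁ ⊕g H₂) ⊔ fromEdgeSet C).deleteEdges C').Connected := by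
  obtain ⟨e, heC, heC'⟩ := Set.exists_of_ssubset hC'
  obtain ⟨x, y, rfl⟩ := hC e heC
  refine (h₁.sum_sup_edge h₂ (v := x) (w := y)).mono (sup_le ?_ ?_)
  · intro p q h
    exact (deleteEdges_adj ..).2 ⟨.inl h, fun hpq => sym2_notMem_of_sum_adj hC h (hC'.1 hpq)⟩
  · rw [edge_le_iff]
    exact .inr ((deleteEdges_adj ..).2 ⟨.inr ⟨heC, Sum.inl_ne_inr⟩, heC'⟩)

lemma isCracker_sum_sup_fromEdgeSet (h₁ : H₁.Connected) (h₂ : H₂.Connected)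
    (hC : ∀ e ∈ C, ∃ x y, e = s(Sum.inl x, Sum.inr y)) (hne : C.Nonempty)
    (hdisj : C.Pairwise (fun e f => ∀ v, ¬(v ∈ e ∧ v ∈ f))) :
    IsCracker ((H₁ ⊕g H₂) ⊔ fromEdgeSet C) C := by
  obtain ⟨x, y, -⟩ := hC _ hne.some_mem
  have : Nonempty α := ⟨x⟩
  have : Nonempty β := ⟨y⟩
  refine ⟨hne, fun e he => ?_, hdisj, ?_, fun C' hC' =>
    connected_deleteEdges_sum_sup_fromEdgeSet h₁ h₂ hC hC'⟩
  · obtain ⟨x, y, rfl⟩ := hC e he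
    exact .inr ⟨he, Sum.inl_ne_inr⟩
  · rw [deleteEdges_sum_sup_fromEdgeSet hC]
    exact not_connected_sum

variable {x₁ x₂ x₃ : α} {y₁ y₂ y₃ : β}

lemma isKCracker_sum_sup_fromEdgeSet_triple (h₁ : H₁.Connected) (h₂ : H₂.Connected)
    (hx₁₂ : x₁ ≠ x₂) (hx₁₃ : x₁ ≠ x₃) (hx₂₃ : x₂ ≠ x₃)
    (hy₁₂ : y₁ ≠ y₂) (hy₁₃ : y₁ ≠ y₃) (hy₂₃ : y₂ ≠ y₃) :
    IsKCracker ((H₁ ⊕g H₂) ⊔ fromEdgeSet {s(.inl x₁, .inr y₁), s(.inl x₂, .inr y₂),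
      s(.inl x₃, .inr y₃)}) {s(.inl x₁, .inr y₁), s(.inl x₂, .inr y₂), s(.inl x₃, .inr y₃)} 3 := by
  refine ⟨isCracker_sum_sup_fromEdgeSet h₁ h₂ ?_ (Set.insert_nonempty _ _) ?_,
    Set.ncard_eq_three.mpr ⟨_, _, _, by simp [hx₁₂], by simp [hx₁₃], by simp [hx₂₃], rfl⟩⟩
  · rintro e (rfl | rfl | rfl) <;> exact ⟨_, _, rfl⟩
  · simp [Set.pairwise_insert, *, hx₁₂.symm, hx₁₃.symm, hx₂₃.symm, hy₁₂.symm, hy₁₃.symm,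
      hy₂₃.symm]

end CrossingEdges

section Breeding

variable {V₁ V₂ : Type*} {G₁ : SimpleGraph V₁} {G₂ : SimpleGraph V₂}
  {v₁ : V₁} {v₂ : V₂} {a b c : V₁} {d e f : V₂}

@[simp]
lemma breed3_adj_inl_inl {x x' : {x : V₁ // x ≠ v₁}} :
    (breed3 G₁ G₂ v₁ v₂ a b c d e f).Adj (.inl x) (.inl x') ↔ G₁.Adj x x' := by
  obtain ⟨x, hx⟩ := x
  obtain ⟨x', hx'⟩ := x'
  simp [breed3, hx, hx', adj_comm]
  exact fun h => h.ne

@[simp]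
lemma breed3_adj_inr_inr {y y' : {y : V₂ // y ≠ v₂}} :
    (breed3 G₁ G₂ v₁ v₂ a b c d e f).Adj (.inr y) (.inr y') ↔ G₂.Adj y y' := by
  obtain ⟨y, hy⟩ := y
  obtain ⟨y', hy'⟩ := y'
  simp [breed3, hy, hy', adj_comm]
  exact fun h => h.ne

@[simp]
lemma breed3_adj_inl_inr {x : {x : V₁ // x ≠ v₁}} {y : {y : V₂ // y ≠ v₂}} :
    (breed3 G₁ G₂ v₁ v₂ a b c d e f).Adj (.inl x) (.inr y) ↔
      x = a ∧ y = d ∨ x = b ∧ y = e ∨ x = c ∧ y = f := by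
  obtain ⟨x, hx⟩ := x
  obtain ⟨y, hy⟩ := y
  simp [breed3, hx, hy]

@[simp]
lemma breed3_adj_inr_inl {x : {x : V₁ // x ≠ v₁}} {y : {y : V₂ // y ≠ v₂}} :
    (breed3 G₁ G₂ v₁ v₂ a b c d e f).Adj (.inr y) (.inl x) ↔
      x = a ∧ y = d ∨ x = b ∧ y = e ∨ x = c ∧ y = f := by
  rw [adj_comm, breed3_adj_inl_inr]

lemma breed3_eq_sum_sup_fromEdgeSet (ha : a ≠ v₁) (hb : b ≠ v₁) (hc : c ≠ v₁)
    (hd : d ≠ v₂) (he : e ≠ v₂) (hf : f ≠ v₂) :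
    breed3 G₁ G₂ v₁ v₂ a b c d e f =
      (G₁.induce {x | x ≠ v₁} ⊕g G₂.induce {y | y ≠ v₂}) ⊔
        fromEdgeSet {s(.inl ⟨a, ha⟩, .inr ⟨d, hd⟩), s(.inl ⟨b, hb⟩, .inr ⟨e, he⟩),
          s(.inl ⟨c, hc⟩, .inr ⟨f, hf⟩)} := by
  ext (⟨x, hx⟩ | ⟨y, hy⟩) (⟨x', hx'⟩ | ⟨y', hy'⟩) <;> simp
  tauto

def breed3Comm : breed3 G₁ G₂ v₁ v₂ a b c d e f ≃g breed3 G₂ G₁ v₂ v₁ d e f a b c where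
  toEquiv := Equiv.sumComm _ _
  map_rel_iff' := by
    rintro (x | y) (x' | y') <;> simp <;> tauto

lemma ncard_neighborSet_breed3_inl (hcub : IsCubic G₁) (hN : G₁.neighborSet v₁ = {a, b, c})
    (hab : a ≠ b) (hac : a ≠ c) (hbc : b ≠ c) (hd : d ≠ v₂) (he : e ≠ v₂) (hf : f ≠ v₂)
    (x : {x : V₁ // x ≠ v₁}) :
    ((breed3 G₁ G₂ v₁ v₂ a b c d e f).neighborSet (.inl x)).ncard = 3 := by
  -- Collapsing all of `Γ₂ - v₂` onto `v₁` maps the neighbourhood of `x` bijectively onto its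
  -- neighbourhood in `Γ₁`.
  set π : {x : V₁ // x ≠ v₁} ⊕ {y : V₂ // y ≠ v₂} → V₁ := Sum.elim Subtype.val fun _ => v₁
  have hv₁ : ∀ z, G₁.Adj z v₁ ↔ z = a ∨ z = b ∨ z = c := fun z => by
    rw [adj_comm, ← mem_neighborSet, hN]; rfl
  have himage : π '' (breed3 G₁ G₂ v₁ v₂ a b c d e f).neighborSet (.inl x) =
      G₁.neighborSet x := by
    ext z
    constructor
    · rintro ⟨y | y, hy, rfl⟩
      · exact breed3_adj_inl_inl.1 hy
      · simp only [mem_neighborSet, breed3_adj_inl_inr] at hy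
        exact (hv₁ x).2 (by tauto)
    · intro hz
      by_cases hzv : z = v₁
      · subst hzv
        rcases (hv₁ x).1 hz with h | h | h
        exacts [⟨.inr ⟨d, hd⟩, by simp [h], rfl⟩, ⟨.inr ⟨e, he⟩, by simp [h], rfl⟩,
          ⟨.inr ⟨f, hf⟩, by simp [h], rfl⟩]
      · exact ⟨.inl ⟨z, hzv⟩, by simpa using hz, rfl⟩
  have hinj : Set.InjOn π ((breed3 G₁ G₂ v₁ v₂ a b c d e f).neighborSet (.inl x)) := by
    rintro (p | p) hp (q | q) hq hpq
    · exact congrArg _ (Subtype.ext hpq)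
    · exact absurd hpq p.2
    · exact absurd hpq.symm q.2
    · simp only [mem_neighborSet, breed3_adj_inl_inr] at hp hq
      exact congrArg _ (Subtype.ext (by grind))
  rw [← hinj.ncard_image, himage, hcub]

lemma isCubic_breed3 (hc₁ : IsCubic G₁) (hc₂ : IsCubic G₂)
    (hN₁ : G₁.neighborSet v₁ = {a, b, c}) (hN₂ : G₂.neighborSet v₂ = {d, e, f})
    (hab : a ≠ b) (hac : a ≠ c) (hbc : b ≠ c) (hde : d ≠ e) (hdf : d ≠ f) (hef : e ≠ f)
    (ha : a ≠ v₁) (hb : b ≠ v₁) (hc : c ≠ v₁) (hd : d ≠ v₂) (he : e ≠ v₂) (hf : f ≠ v₂) :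
    IsCubic (breed3 G₁ G₂ v₁ v₂ a b c d e f) := by
  rintro (x | y)
  · exact ncard_neighborSet_breed3_inl hc₁ hN₁ hab hac hbc hd he hf x
  · rw [← breed3Comm.ncard_neighborSet]
    exact ncard_neighborSet_breed3_inl hc₂ hN₂ hde hdf hef ha hb hc y

end Breeding

/-- the result of a type 3 breeding operation on connected cubic graphs,
performed at vertices none of whose incident edges is a bridge, is a connected cubic
graph in which the three new edges form a 3-cracker. -/
theorem breed3_spec {V₁ V₂ : Type*} (G₁ : SimpleGraph V₁) (G₂ : SimpleGraph V₂)
    (h₁ : G₁.Connected) (h₂ : G₂.Connected) (hc₁ : IsCubic G₁) (hc₂ : IsCubic G₂)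
    (v₁ : V₁) (a b c : V₁) (v₂ : V₂) (d e f : V₂)
    (hva : G₁.Adj v₁ a) (hvb : G₁.Adj v₁ b) (hvc : G₁.Adj v₁ c)
    (hab : a ≠ b) (hac : a ≠ c) (hbc : b ≠ c)
    (hnba : ¬ G₁.IsBridge s(v₁, a)) (hnbb : ¬ G₁.IsBridge s(v₁, b))
    (hnbc : ¬ G₁.IsBridge s(v₁, c))
    (hvd : G₂.Adj v₂ d) (hve : G₂.Adj v₂ e) (hvf : G₂.Adj v₂ f)
    (hde : d ≠ e) (hdf : d ≠ f) (hef : e ≠ f)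
    (hnbd : ¬ G₂.IsBridge s(v₂, d)) (hnbe : ¬ G₂.IsBridge s(v₂, e))
    (hnbf : ¬ G₂.IsBridge s(v₂, f)) :
    (breed3 G₁ G₂ v₁ v₂ a b c d e f).Connected ∧
      IsCubic (breed3 G₁ G₂ v₁ v₂ a b c d e f) ∧
      IsKCracker (breed3 G₁ G₂ v₁ v₂ a b c d e f)
        {s(Sum.inl ⟨a, hva.ne'⟩, Sum.inr ⟨d, hvd.ne'⟩),
         s(Sum.inl ⟨b, hvb.ne'⟩, Sum.inr ⟨e, hve.ne'⟩),
         s(Sum.inl ⟨c, hvc.ne'⟩, Sum.inr ⟨f, hvf.ne'⟩)} 3 := by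
  have hN₁ := neighborSet_eq_of_ncard_eq_three (hc₁ v₁) hva hvb hvc hab hac hbc
  have hN₂ := neighborSet_eq_of_ncard_eq_three (hc₂ v₂) hvd hve hvf hde hdf hef
  have hcracker : IsKCracker (breed3 G₁ G₂ v₁ v₂ a b c d e f)
      {s(.inl ⟨a, hva.ne'⟩, .inr ⟨d, hvd.ne'⟩), s(.inl ⟨b, hvb.ne'⟩, .inr ⟨e, hve.ne'⟩),
        s(.inl ⟨c, hvc.ne'⟩, .inr ⟨f, hvf.ne'⟩)} 3 := by
    rw [breed3_eq_sum_sup_fromEdgeSet hva.ne' hvb.ne' hvc.ne' hvd.ne' hve.ne' hvf.ne']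
    exact isKCracker_sum_sup_fromEdgeSet_triple
      (h₁.induce_ne_of_neighborSet_eq hN₁ hnba hnbb hnbc)
      (h₂.induce_ne_of_neighborSet_eq hN₂ hnbd hnbe hnbf)
      (by simpa) (by simpa) (by simpa) (by simpa) (by simpa) (by simpa)
  exact ⟨hcracker.1.connected, isCubic_breed3 hc₁ hc₂ hN₁ hN₂ hab hac hbc hde hdf hef
    hva.ne' hvb.ne' hvc.ne' hvd.ne' hve.ne' hvf.ne', hcracker⟩
end

section
/- Let Γ1 = (V1, E1) be a connected cubic graph with a bridge e1 = (a,b), where the other two neighbours of a are c and d. Let v1, v2 be two new vertices and let ΓD be the graph with vertex set V1 ∪ {v1, v2} and edge set (E1 \ {(a,c), (a,d)}) ∪ {(a,v1), (a,v2), (v1,v2), (v1,c), (v2,d)}. Then ΓD is a connected cubic graph and the edge (a,b) is still a bridge of ΓD. -/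
open SimpleGraph

/-- The type 3 parthenogenic operation: at a vertex a incident to a bridge (a,b), with
other neighbours c and d, delete the edges (a,c), (a,d) and insert a parthenogenic
triangle on two new vertices v₁, v₂ (here Fin 2) with edges (a,v₁), (a,v₂), (v₁,v₂),
(v₁,c), (v₂,d). -/
def parth3 {V₁ : Type*} (G₁ : SimpleGraph V₁) (a c d : V₁) : SimpleGraph (V₁ ⊕ Fin 2) :=
  SimpleGraph.fromRel (fun p q =>
    (∃ x y : V₁, p = Sum.inl x ∧ q = Sum.inl y ∧ G₁.Adj x y ∧
        s(x, y) ≠ s(a, c) ∧ s(x, y) ≠ s(a, d)) ∨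
    (p = Sum.inl a ∧ q = Sum.inr 0) ∨
    (p = Sum.inl a ∧ q = Sum.inr 1) ∨
    (p = Sum.inr 0 ∧ q = Sum.inr 1) ∨
    (p = Sum.inr 0 ∧ q = Sum.inl c) ∨
    (p = Sum.inr 1 ∧ q = Sum.inl d))

/-!
Write `H = parth3 G a c d`; the new vertex `inr 0` is joined to the apex `a` and the foot
`c`, and `inr 1` to `a` and the foot `d`. Every edge of `G` is an edge of `H` or is replaced
by a path of length two through a new vertex, so `H` is connected. Conversely, collapsing
both new vertices onto `a` sends every edge of `H` other than `ab` to a point or to an edge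
of `G` other than `ab`, so a path from `a` to `b` avoiding `ab` in `H` would give one in `G`.
Degrees are preserved: `a` trades `c, d` for the two new vertices, `c` and `d` each trade `a`
for one of them, and each new vertex sees `a`, the other new vertex and its foot.
-/

open Sum

theorem SimpleGraph.Reachable.lift {V W : Type*} {G : SimpleGraph V} {G' : SimpleGraph W}
    (f : V → W) (hf : ∀ ⦃u v⦄, G.Adj u v → G'.Reachable (f u) (f v)) {u v : V}
    (h : G.Reachable u v) : G'.Reachable (f u) (f v) := by
  rw [reachable_iff_reflTransGen] at h ⊢
  exact h.lift' f fun u v huv => (reachable_iff_reflTransGen _ _).mp (hf huv)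

theorem SimpleGraph.neighborSet_eq_of_ncard_eq_three_s12 {V : Type*} {G : SimpleGraph V}
    {a b c d : V} (h : (G.neighborSet a).ncard = 3) (hab : G.Adj a b) (hac : G.Adj a c)
    (had : G.Adj a d) (hbc : b ≠ c) (hbd : b ≠ d) (hcd : c ≠ d) :
    G.neighborSet a = {b, c, d} := by
  refine (Set.eq_of_subset_of_ncard_le ?_ ?_ (Set.finite_of_ncard_pos (by omega))).symm
  · simp [Set.insert_subset_iff, hab, hac, had]
  · rw [h, Set.ncard_eq_three.mpr ⟨b, c, d, hbc, hbd, hcd, rfl⟩]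

section Parth3

variable {V : Type*} {G : SimpleGraph V} {a b c d : V}

@[simp] lemma parth3_adj_inl_inl {x y : V} :
    (parth3 G a c d).Adj (inl x) (inl y) ↔
      G.Adj x y ∧ s(x, y) ≠ s(a, c) ∧ s(x, y) ≠ s(a, d) := by
  simp only [parth3, fromRel_adj, ne_eq, inl.injEq, reduceCtorEq, false_and, and_false,
    or_false, exists_and_left, exists_eq_left']
  constructor
  · rintro ⟨-, h | ⟨hxy, hac, had⟩⟩
    · exact h
    · exact ⟨hxy.symm, by rwa [Sym2.eq_swap], by rwa [Sym2.eq_swap]⟩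
  · intro h
    exact ⟨h.1.ne, .inl h⟩

@[simp] lemma parth3_adj_inl_inr {x : V} {i : Fin 2} :
    (parth3 G a c d).Adj (inl x) (inr i) ↔ x = a ∨ x = ![c, d] i := by
  fin_cases i <;> simp [parth3, fromRel_adj]

@[simp] lemma parth3_adj_inr_inl {x : V} {i : Fin 2} :
    (parth3 G a c d).Adj (inr i) (inl x) ↔ x = a ∨ x = ![c, d] i := by
  rw [adj_comm, parth3_adj_inl_inr]

@[simp] lemma parth3_adj_inr_inr {i j : Fin 2} :
    (parth3 G a c d).Adj (inr i) (inr j) ↔ i ≠ j := by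
  fin_cases i <;> fin_cases j <;> simp [parth3, fromRel_adj]

lemma parth3_reachable_inl_apex_inl_foot (i : Fin 2) :
    (parth3 G a c d).Reachable (inl a) (inl (![c, d] i)) :=
  (parth3_adj_inl_inr.mpr (.inl rfl)).reachable.trans
    (parth3_adj_inr_inl (i := i).mpr (.inr rfl)).reachable

lemma parth3_reachable_inl_of_adj {x y : V} (hxy : G.Adj x y) :
    (parth3 G a c d).Reachable (inl x) (inl y) := by
  have via (i : Fin 2) (h : s(x, y) = s(a, ![c, d] i)) :
      (parth3 G a c d).Reachable (inl x) (inl y) := by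
    rcases Sym2.eq_iff.mp h with ⟨rfl, rfl⟩ | ⟨rfl, rfl⟩
    exacts [parth3_reachable_inl_apex_inl_foot i, (parth3_reachable_inl_apex_inl_foot i).symm]
  by_cases hc : s(x, y) = s(a, c)
  · exact via 0 hc
  by_cases hd : s(x, y) = s(a, d)
  · exact via 1 hd
  exact (parth3_adj_inl_inl.mpr ⟨hxy, hc, hd⟩).reachable

theorem connected_parth3 (hG : G.Connected) : (parth3 G a c d).Connected := by
  refine (connected_iff_exists_forall_reachable _).mpr ⟨inl a, ?_⟩
  rintro (x | i)
  · exact (hG.preconnected a x).lift inl fun _ _ => parth3_reachable_inl_of_adj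
  · exact (parth3_adj_inl_inr.mpr (.inl rfl)).reachable

def parth3Collapse (a : V) : V ⊕ Fin 2 → V := Sum.elim id fun _ => a

lemma reachable_deleteEdges_apex_foot (hac : G.Adj a c) (had : G.Adj a d) (hcb : c ≠ b)
    (hdb : d ≠ b) (i : Fin 2) : (G.deleteEdges {s(a, b)}).Reachable a (![c, d] i) := by
  refine Adj.reachable ?_
  fin_cases i
  · simp [deleteEdges_adj, hac, hcb, hac.ne']
  · simp [deleteEdges_adj, had, hdb, had.ne']

lemma reachable_parth3Collapse_of_adj (hac : G.Adj a c) (had : G.Adj a d) (hcb : c ≠ b)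
    (hdb : d ≠ b) {p q : V ⊕ Fin 2}
    (hpq : ((parth3 G a c d).deleteEdges {s(inl a, inl b)}).Adj p q) :
    (G.deleteEdges {s(a, b)}).Reachable (parth3Collapse a p) (parth3Collapse a q) := by
  have foot := reachable_deleteEdges_apex_foot hac had hcb hdb
  rcases p with x | i <;> rcases q with y | j <;> simp only [deleteEdges_adj] at hpq
  · obtain ⟨hadj, hne⟩ := hpq
    obtain ⟨hxy, -, -⟩ := parth3_adj_inl_inl.mp hadj
    refine (deleteEdges_adj.mpr ⟨hxy, fun h => hne ?_⟩).reachable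
    simpa using congrArg (Sym2.map (inl (β := Fin 2))) (Set.mem_singleton_iff.mp h)
  · obtain ⟨hxj, -⟩ := hpq
    rcases parth3_adj_inl_inr.mp hxj with rfl | rfl
    exacts [.rfl, (foot j).symm]
  · obtain ⟨hiy, -⟩ := hpq
    rcases parth3_adj_inr_inl.mp hiy with rfl | rfl
    exacts [.rfl, foot i]
  · exact .rfl

theorem isBridge_parth3 (hbr : G.IsBridge s(a, b)) (hac : G.Adj a c) (had : G.Adj a d)
    (hcb : c ≠ b) (hdb : d ≠ b) : (parth3 G a c d).IsBridge s(inl a, inl b) :=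
  fun h => hbr <|
    h.lift (parth3Collapse a) fun _ _ => reachable_parth3Collapse_of_adj hac had hcb hdb

lemma parth3_neighborSet_inr (i : Fin 2) :
    (parth3 G a c d).neighborSet (inr i) = {inl a, inl (![c, d] i), inr (i + 1)} := by
  ext (x | j)
  · simp [eq_comm]
  · fin_cases i <;> fin_cases j <;> simp

lemma parth3_neighborSet_inl_apex (hN : G.neighborSet a = {b, c, d}) (hbc : b ≠ c)
    (hbd : b ≠ d) : (parth3 G a c d).neighborSet (inl a) = {inl b, inr 0, inr 1} := by
  ext (x | j)
  · rw [mem_neighborSet, parth3_adj_inl_inl, ← mem_neighborSet, hN]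
    simp only [Set.mem_insert_iff, Set.mem_singleton_iff, ne_eq, Sym2.eq_iff]
    grind
  · fin_cases j <;> simp

lemma parth3_neighborSet_inl_foot (hac : a ≠ c) (had : a ≠ d) (hcd : c ≠ d) (i : Fin 2) :
    (parth3 G a c d).neighborSet (inl (![c, d] i)) =
      insert (inr i) (inl '' (G.neighborSet (![c, d] i) \ {a})) := by
  ext (x | j)
  · rw [mem_neighborSet, parth3_adj_inl_inl]
    fin_cases i <;> simp [hac.symm, had.symm, hcd, hcd.symm]
  · fin_cases i <;> fin_cases j <;> simp [hac.symm, had.symm, hcd, hcd.symm]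

lemma parth3_neighborSet_inl_of_ne {x : V} (hxa : x ≠ a) (hxc : x ≠ c) (hxd : x ≠ d) :
    (parth3 G a c d).neighborSet (inl x) = inl '' G.neighborSet x := by
  ext (y | j)
  · simp [hxa, hxc, hxd]
  · fin_cases j <;> simp [hxa, hxc, hxd]

lemma parth3_ncard_neighborSet_inl_foot (hG : IsCubic G) (hac : G.Adj a c) (had : G.Adj a d)
    (hcd : c ≠ d) (i : Fin 2) : ((parth3 G a c d).neighborSet (inl (![c, d] i))).ncard = 3 := by
  have hfin : (G.neighborSet (![c, d] i)).Finite := Set.finite_of_ncard_pos (by rw [hG]; omega)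
  have ha : a ∈ G.neighborSet (![c, d] i) := by fin_cases i; exacts [hac.symm, had.symm]
  rw [parth3_neighborSet_inl_foot hac.ne had.ne hcd,
    Set.ncard_insert_of_notMem (by simp) (hfin.sdiff.image _),
    Set.ncard_image_of_injective _ inl_injective, Set.ncard_sdiff_singleton_of_mem ha, hG]

theorem isCubic_parth3 (hG : IsCubic G) (hab : G.Adj a b) (hac : G.Adj a c) (had : G.Adj a d)
    (hbc : b ≠ c) (hbd : b ≠ d) (hcd : c ≠ d) : IsCubic (parth3 G a c d) := by
  rintro (x | i)
  · by_cases hxa : x = a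
    · subst hxa
      rw [parth3_neighborSet_inl_apex
        (neighborSet_eq_of_ncard_eq_three_s12 (hG x) hab hac had hbc hbd hcd) hbc hbd]
      exact Set.ncard_eq_three.mpr ⟨_, _, _, by simp, by simp, by simp, rfl⟩
    by_cases hxc : x = c
    · exact hxc ▸ parth3_ncard_neighborSet_inl_foot hG hac had hcd 0
    by_cases hxd : x = d
    · exact hxd ▸ parth3_ncard_neighborSet_inl_foot hG hac had hcd 1
    rw [parth3_neighborSet_inl_of_ne hxa hxc hxd, Set.ncard_image_of_injective _ inl_injective, hG]
  · rw [parth3_neighborSet_inr]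
    refine Set.ncard_eq_three.mpr ⟨_, _, _, ?_, by simp, by simp, rfl⟩
    fin_cases i <;> simp [hac.ne, had.ne]

end Parth3

/-- inserting a parthenogenic triangle next to a bridge (a,b) of a
connected cubic graph yields a connected cubic graph in which (a,b) is still a bridge. -/
theorem parth3_spec {V₁ : Type*} (G₁ : SimpleGraph V₁)
    (h₁ : G₁.Connected) (hc₁ : IsCubic G₁) (a b c d : V₁)
    (hbr : G₁.IsBridge s(a, b))
    (hac : G₁.Adj a c) (had : G₁.Adj a d)
    (hcd : c ≠ d) (hcb : c ≠ b) (hdb : d ≠ b) :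
    (parth3 G₁ a c d).Connected ∧ IsCubic (parth3 G₁ a c d) ∧
      (parth3 G₁ a c d).IsBridge s(Sum.inl a, Sum.inl b) := by
  have hab : G₁.Adj a b := hbr.reachable_iff_adj.mp (h₁.preconnected a b)
  exact ⟨connected_parth3 h₁, isCubic_parth3 hc₁ hab hac had hcb.symm hdb.symm hcd,
    isBridge_parth3 hbr hac had hcb hdb⟩
end
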